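/- arXiv:2108.08959 — 2 statements merged into one kernel-verified Lean document; each statement's English description precedes it below -/
import Mathlib

section
/- If f : [0,L] → ℝ is continuous with ∫₀^L f = 0, then the convolution v(x) = ∫₀^L G_L(x - t) f(t) dt satisfies v''(x) = f(x) for all x in the open interval (0, L). -/
open MeasureTheory intervalIntegral Set

lemma poly_integral_aux (f : ℝ → ℝ) (hf : Continuous f) (a b α β γ : ℝ) :
    (∫ t in a..b, (α*t^2 + β*t + γ) * f t)
      = α * (∫ t in a..b, t^2 * f t) + β * (∫ t in a..b, t * f t)
        + γ * (∫ t in a..b, f t) := by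
  have h2 : IntervalIntegrable (fun t => α * (t^2 * f t)) volume a b :=
    (by continuity : Continuous fun t => α * (t^2 * f t)).intervalIntegrable a b
  have h1 : IntervalIntegrable (fun t => β * (t * f t)) volume a b :=
    (by continuity : Continuous fun t => β * (t * f t)).intervalIntegrable a b
  have h0 : IntervalIntegrable (fun t => γ * f t) volume a b :=
    (by continuity : Continuous fun t => γ * f t).intervalIntegrable a b
  have : (fun t => (α*t^2 + β*t + γ) * f t)
      = fun t => α * (t^2 * f t) + (β * (t * f t) + γ * f t) := by
    funext t; ring
  rw [this, intervalIntegral.integral_add h2 (h1.add h0),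
    intervalIntegral.integral_add h1 h0,
    intervalIntegral.integral_const_mul, intervalIntegral.integral_const_mul,
    intervalIntegral.integral_const_mul]
  ring

lemma final_calc (L y P0 P1 P2 Q1 Q2 : ℝ) (hL0 : L ≠ 0) :
    -(1 / (2 * L)) * P2 + (y - L / 2) / L * P1 + (-(1 / (2 * L)) * (y - L / 2) ^ 2 + L / 24) * P0 +
      (-(1 / (2 * L)) * Q2 + (y + L / 2) / L * Q1 + (-(1 / (2 * L)) * (y + L / 2) ^ 2 + L / 24) * -P0) =
    (P1 + Q1) * y / L - (P2 + Q2) / (2 * L) + (P1 + Q1) / 2 + y * P0 - P1 := by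
  field_simp
  ring

/-- If `f` is continuous, `L`-periodic and mean-zero on `[0,L]`, then
`v(x) = ∫₀^L G_L(x - t) f(t) dt` satisfies `v'' = f` on `(0, L)`. -/
theorem stmt_2 (L : ℝ) (hL : 0 < L)
    (G : ℝ → ℝ)
    (hG : ∀ x, G x = -(1/(2*L)) * ((x - L * ⌊x / L⌋) - L/2)^2 + L/24)
    (f : ℝ → ℝ) (hf : Continuous f) (hper : ∀ x, f (x + L) = f x)
    (hmean : ∫ t in (0:ℝ)..L, f t = 0)
    (v : ℝ → ℝ)
    (hv : ∀ x, v x = ∫ t in (0:ℝ)..L, G (x - t) * f t) :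
    ∀ x ∈ Set.Ioo (0:ℝ) L, deriv (deriv v) x = f x := by
  have hL0 : L ≠ 0 := ne_of_gt hL
  set A := ∫ t in (0:ℝ)..L, t * f t with hA
  set B := ∫ t in (0:ℝ)..L, t^2 * f t with hB
  set W : ℝ → ℝ := fun y => ∫ t in (0:ℝ)..y, f t with hWdef
  set Z : ℝ → ℝ := fun y => ∫ t in (0:ℝ)..y, t * f t with hZdef
  set F : ℝ → ℝ := fun y => A * y / L - B/(2*L) + A/2 + y * W y - Z y with hFdef
  have hcf1 : Continuous (fun t : ℝ => t * f t) := by continuity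
  have hcf2 : Continuous (fun t : ℝ => t^2 * f t) := by continuity
  -- key pointwise equality on (0, L)
  have key : Set.EqOn v F (Set.Ioo 0 L) := by
    intro y hy
    obtain ⟨hy0, hyL⟩ := hy
    set g1 : ℝ → ℝ := fun t =>
      (-(1/(2*L))*t^2 + ((y - L/2)/L)*t + (-(1/(2*L))*(y - L/2)^2 + L/24)) * f t with hg1
    set g2 : ℝ → ℝ := fun t =>
      (-(1/(2*L))*t^2 + ((y + L/2)/L)*t + (-(1/(2*L))*(y + L/2)^2 + L/24)) * f t with hg2
    have hg1c : Continuous g1 := by rw [hg1]; continuity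
    have hg2c : Continuous g2 := by rw [hg2]; continuity
    have e1 : ∀ t ∈ Set.uIcc (0:ℝ) y, G (y - t) * f t = g1 t := by
      intro t ht
      rw [Set.uIcc_of_le hy0.le] at ht
      have hfl : ⌊(y - t) / L⌋ = 0 := by
        rw [Int.floor_eq_zero_iff]
        constructor
        · exact div_nonneg (by linarith [ht.2]) hL.le
        · rw [div_lt_one hL]; linarith [ht.1]
      rw [hG, hfl, hg1]
      push_cast
      have hb : y - t - L * 0 - L / 2 = y - t - L/2 := by ring
      rw [hb]
      ring
    have e2 : ∀ t ∈ Set.Ioc y L, G (y - t) * f t = g2 t := by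
      intro t ht
      have hfl : ⌊(y - t) / L⌋ = -1 := by
        apply Int.floor_eq_iff.mpr
        constructor
        · push_cast
          rw [neg_le, ← neg_div]
          rw [div_le_one hL]
          linarith [ht.2]
        · push_cast
          norm_num
          exact div_neg_of_neg_of_pos (by linarith [ht.1]) hL
      rw [hG, hfl, hg2]
      push_cast
      have hb : y - t - L * (-1) - L / 2 = y - t + L - L/2 := by ring
      rw [hb]
      ring
    -- integrability of the G-integrand on each piece
    have hI1 : IntervalIntegrable (fun t => G (y - t) * f t) volume 0 y := by
      rw [intervalIntegrable_iff_integrableOn_Ioc_of_le hy0.le]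
      exact ((hg1c.integrableOn_Ioc)).congr_fun
        (fun t ht => (e1 t (Set.Ioc_subset_Icc_self.trans
          (by rw [Set.uIcc_of_le hy0.le]) ht)).symm) measurableSet_Ioc
    have hI2 : IntervalIntegrable (fun t => G (y - t) * f t) volume y L := by
      rw [intervalIntegrable_iff_integrableOn_Ioc_of_le hyL.le]
      exact ((hg2c.integrableOn_Ioc)).congr_fun
        (fun t ht => (e2 t ht).symm) measurableSet_Ioc
    have hsplit : v y = (∫ t in (0:ℝ)..y, G (y - t) * f t)
        + ∫ t in y..L, G (y - t) * f t := by
      rw [hv, intervalIntegral.integral_add_adjacent_intervals hI1 hI2]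
    have s1 : (∫ t in (0:ℝ)..y, G (y - t) * f t) = ∫ t in (0:ℝ)..y, g1 t :=
      intervalIntegral.integral_congr e1
    have s2 : (∫ t in y..L, G (y - t) * f t) = ∫ t in y..L, g2 t := by
      apply intervalIntegral.integral_congr_ae
      filter_upwards with t ht
      rw [Set.uIoc_of_le hyL.le] at ht
      exact e2 t ht
    -- sums of the pieces over the whole interval
    have hfint : ∀ a b : ℝ, IntervalIntegrable f volume a b := fun a b =>
      hf.intervalIntegrable a b
    have h1int : ∀ a b : ℝ, IntervalIntegrable (fun t => t * f t) volume a b := fun a b =>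
      hcf1.intervalIntegrable a b
    have h2int : ∀ a b : ℝ, IntervalIntegrable (fun t => t^2 * f t) volume a b := fun a b =>
      hcf2.intervalIntegrable a b
    have sum0 : (∫ t in (0:ℝ)..y, f t) + (∫ t in y..L, f t) = 0 := by
      rw [intervalIntegral.integral_add_adjacent_intervals (hfint 0 y) (hfint y L)]
      exact hmean
    have sum1 : (∫ t in (0:ℝ)..y, t * f t) + (∫ t in y..L, t * f t) = A := by
      rw [intervalIntegral.integral_add_adjacent_intervals (h1int 0 y) (h1int y L)]
    have sum2 : (∫ t in (0:ℝ)..y, t^2 * f t) + (∫ t in y..L, t^2 * f t) = B := by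
      rw [intervalIntegral.integral_add_adjacent_intervals (h2int 0 y) (h2int y L)]
    rw [hsplit, s1, s2, hg1, hg2, poly_integral_aux f hf, poly_integral_aux f hf]
    simp only [hFdef, hWdef, hZdef]
    set P0 := ∫ t in (0:ℝ)..y, f t with hP0
    set P1 := ∫ t in (0:ℝ)..y, t * f t with hP1
    set P2 := ∫ t in (0:ℝ)..y, t^2 * f t with hP2
    set Q0 := ∫ t in y..L, f t with hQ0
    set Q1 := ∫ t in y..L, t * f t with hQ1
    set Q2 := ∫ t in y..L, t^2 * f t with hQ2
    have hq0 : Q0 = -P0 := by linarith [sum0]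
    rw [hq0, ← sum1, ← sum2]
    exact final_calc L y P0 P1 P2 Q1 Q2 hL0
  -- derivatives
  have hWd : ∀ y : ℝ, HasDerivAt W (f y) y := fun y =>
    intervalIntegral.integral_hasDerivAt_right (hf.intervalIntegrable 0 y)
      hf.aestronglyMeasurable.stronglyMeasurableAtFilter hf.continuousAt
  have hZd : ∀ y : ℝ, HasDerivAt Z (y * f y) y := fun y =>
    intervalIntegral.integral_hasDerivAt_right (hcf1.intervalIntegrable 0 y)
      hcf1.aestronglyMeasurable.stronglyMeasurableAtFilter hcf1.continuousAt
  have hFd : ∀ y : ℝ, HasDerivAt F (A / L + W y) y := by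
    intro y
    have h1 : HasDerivAt (fun s : ℝ => A * s / L - B/(2*L) + A/2) (A / L) y := by
      have := (((hasDerivAt_id y).const_mul A).div_const L).sub_const (B/(2*L))
      simpa using this.add_const (A/2)
    have h2 : HasDerivAt (fun s : ℝ => s * W s) (1 * W y + y * f y) y :=
      (hasDerivAt_id y).mul (hWd y)
    have h3 := (h1.add h2).sub (hZd y)
    have : A / L + (1 * W y + y * f y) - y * f y = A / L + W y := by ring
    rw [this] at h3
    exact h3
  have hderivF : deriv F = fun y => A / L + W y := funext fun y => (hFd y).deriv
  intro x hx
  have hmemx : Set.Ioo (0:ℝ) L ∈ nhds x := isOpen_Ioo.mem_nhds hx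
  have hdvF : ∀ y ∈ Set.Ioo (0:ℝ) L, deriv v y = deriv F y := by
    intro y hy
    exact Filter.EventuallyEq.deriv_eq
      (Filter.eventuallyEq_of_mem (isOpen_Ioo.mem_nhds hy) key)
  have hdd : deriv (deriv v) x = deriv (deriv F) x :=
    Filter.EventuallyEq.deriv_eq (Filter.eventuallyEq_of_mem hmemx hdvF)
  rw [hdd, hderivF]
  exact (((hWd x).const_add (A / L))).deriv
end

section
/- The function G_Y(x) = -(1/2) e^{-|x̃|} - (e^{-L}/(1 - e^{-L})) cosh(x̃), where x̃ = ((x - L/2) mod L) - L/2, satisfies: for any continuous L-periodic f, v = G_Y * f solves v'' - v = f on (0, L). -/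
open intervalIntegral Real Set

lemma alg_core (a b : ℝ) (ha : 0 < a) (hb : 1 < b) :
    -(1/2) * a⁻¹ - ((b*b)⁻¹ / (1 - (b*b)⁻¹)) * ((a + a⁻¹)/2)
      = -((a * b⁻¹ + a⁻¹ * b)/2) / (2 * ((b - b⁻¹)/2)) := by
  have ha' : a ≠ 0 := ne_of_gt ha
  have hb0 : (0:ℝ) < b := by linarith
  have hb' : b ≠ 0 := ne_of_gt hb0
  have hd : b*b - 1 ≠ 0 := by nlinarith
  have e1 : 1 - (b*b)⁻¹ = (b*b-1)/(b*b) := by field_simp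
  have e2 : b - b⁻¹ = (b*b-1)/b := by field_simp
  rw [e1, e2]
  field_simp
  ring_nf
  have hd2 : -1 + b^2 ≠ 0 := by nlinarith
  field_simp
  ring

lemma alg_id (L u : ℝ) (hL : 0 < L) :
    -(1/2) * Real.exp (-u) - (Real.exp (-L) / (1 - Real.exp (-L))) * Real.cosh u
      = -Real.cosh (u - L/2) / (2 * Real.sinh (L/2)) := by
  have ha : (0:ℝ) < Real.exp u := Real.exp_pos u
  have hb : (1:ℝ) < Real.exp (L/2) := by
    rw [show (1:ℝ) = Real.exp 0 by simp]
    exact Real.exp_lt_exp.mpr (by linarith)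
  have hbb : Real.exp L = Real.exp (L/2) * Real.exp (L/2) := by
    rw [← Real.exp_add]; ring_nf
  rw [Real.cosh_eq, Real.cosh_eq, Real.sinh_eq]
  rw [Real.exp_neg u, Real.exp_neg L, hbb]
  rw [show u - L/2 = u + -(L/2) by ring, show -(u + -(L/2)) = -u + L/2 by ring]
  rw [Real.exp_add, Real.exp_add, Real.exp_neg u, Real.exp_neg (L/2)]
  exact alg_core _ _ ha hb

/-- The Yukawa kernel `G_Y(x) = -(1/2) e^{-|x̃|} - (e^{-L}/(1-e^{-L})) cosh x̃`,
where `x̃` is the representative of `x` mod `L` in `[-L/2, L/2)`, satisfies: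
for any continuous `L`-periodic `f`, the periodic convolution `v = G_Y * f`
solves `v'' - v = f` on `(0, L)`. Here `x̃ = x - L * ⌊x/L + 1/2⌋`. -/
theorem stmt_5 (L : ℝ) (hL : 0 < L)
    (G : ℝ → ℝ)
    (hG : ∀ x, G x =
      -(1/2) * Real.exp (-|x - L * ⌊x / L + 1/2⌋|)
        - (Real.exp (-L) / (1 - Real.exp (-L))) * Real.cosh (x - L * ⌊x / L + 1/2⌋))
    (f : ℝ → ℝ) (hf : Continuous f) (hper : ∀ x, f (x + L) = f x)
    (v : ℝ → ℝ)
    (hv : ∀ x, v x = ∫ t in (0:ℝ)..L, G (x - t) * f t) :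
    ∀ x ∈ Set.Ioo (0:ℝ) L, deriv (deriv v) x - v x = f x := by
  -- basic facts
  have hc : 0 < Real.sinh (L/2) := by
    rw [show (0:ℝ) = Real.sinh 0 by simp]
    exact Real.sinh_lt_sinh.mpr (by linarith)
  set c : ℝ := Real.sinh (L/2) with hcdef
  -- periodicity of G
  have G_per : ∀ y : ℝ, G (y + L) = G y := by
    intro y
    have hL' : L ≠ 0 := ne_of_gt hL
    have hfl : ((y + L) / L + 1/2) = (y / L + 1/2) + 1 := by field_simp; ring
    have : (y + L) - L * ⌊(y + L) / L + 1/2⌋ = y - L * ⌊y / L + 1/2⌋ := by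
      rw [hfl, Int.floor_add_one]; push_cast; ring
    rw [hG, hG, this]
  -- evaluation of G on [0, L]
  have G_eval : ∀ y ∈ Set.Icc (0:ℝ) L, G y = -Real.cosh (y - L/2) / (2 * c) := by
    rintro y ⟨hy0, hyL⟩
    rcases lt_or_ge y (L/2) with h | h
    · have hfl : ⌊y / L + 1/2⌋ = 0 := by
        rw [Int.floor_eq_zero_iff]
        refine ⟨by positivity, ?_⟩
        have : y / L < 1/2 := by rw [div_lt_iff₀ hL]; linarith
        simpa using by linarith
      rw [hG, hfl]
      push_cast
      rw [mul_zero, sub_zero, abs_of_nonneg hy0]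
      exact alg_id L y hL
    · have hfl : ⌊y / L + 1/2⌋ = 1 := by
        rw [Int.floor_eq_iff]
        constructor
        · have : (1:ℝ)/2 ≤ y / L := by rw [le_div_iff₀ hL]; linarith
          push_cast; linarith
        · have : y / L ≤ 1 := by rw [div_le_one hL]; linarith
          push_cast; linarith
      rw [hG, hfl]
      push_cast
      rw [mul_one, abs_of_nonpos (by linarith)]
      have := alg_id L (L - y) hL
      rw [show -(y - L) = L - y by ring, show y - L = -(L - y) by ring, Real.cosh_neg]
      rw [this, show L - y - L/2 = -(y - L/2) by ring, Real.cosh_neg]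
  -- auxiliary antiderivative machinery
  have hcontA : Continuous fun t => Real.cosh (t + L/2) * f t := by fun_prop
  have hcontB : Continuous fun t => Real.sinh (t + L/2) * f t := by fun_prop
  have hcontC : Continuous fun t => Real.cosh (t - L/2) * f t := by fun_prop
  have hcontS : Continuous fun t => Real.sinh (t - L/2) * f t := by fun_prop
  set A : ℝ → ℝ := fun y => ∫ t in (0:ℝ)..y, Real.cosh (t + L/2) * f t with hA
  set B : ℝ → ℝ := fun y => ∫ t in (0:ℝ)..y, Real.sinh (t + L/2) * f t with hB
  set C : ℝ → ℝ := fun y => ∫ t in (0:ℝ)..y, Real.cosh (t - L/2) * f t with hC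
  set S : ℝ → ℝ := fun y => ∫ t in (0:ℝ)..y, Real.sinh (t - L/2) * f t with hS
  have hderA : ∀ y : ℝ, HasDerivAt A (Real.cosh (y + L/2) * f y) y := fun y =>
    integral_hasDerivAt_right (hcontA.intervalIntegrable _ _)
      (hcontA.stronglyMeasurableAtFilter _ _) hcontA.continuousAt
  have hderB : ∀ y : ℝ, HasDerivAt B (Real.sinh (y + L/2) * f y) y := fun y =>
    integral_hasDerivAt_right (hcontB.intervalIntegrable _ _)
      (hcontB.stronglyMeasurableAtFilter _ _) hcontB.continuousAt
  have hderC : ∀ y : ℝ, HasDerivAt C (Real.cosh (y - L/2) * f y) y := fun y =>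
    integral_hasDerivAt_right (hcontC.intervalIntegrable _ _)
      (hcontC.stronglyMeasurableAtFilter _ _) hcontC.continuousAt
  have hderS : ∀ y : ℝ, HasDerivAt S (Real.sinh (y - L/2) * f y) y := fun y =>
    integral_hasDerivAt_right (hcontS.intervalIntegrable _ _)
      (hcontS.stronglyMeasurableAtFilter _ _) hcontS.continuousAt
  set P : ℝ → ℝ := fun y => A y - C y + C L with hP
  set Q : ℝ → ℝ := fun y => B y - S y + S L with hQ
  have hderP : ∀ y : ℝ,
      HasDerivAt P (Real.cosh (y + L/2) * f y - Real.cosh (y - L/2) * f y) y := fun y =>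
    ((hderA y).sub (hderC y)).add_const _
  have hderQ : ∀ y : ℝ,
      HasDerivAt Q (Real.sinh (y + L/2) * f y - Real.sinh (y - L/2) * f y) y := fun y =>
    ((hderB y).sub (hderS y)).add_const _
  set w : ℝ → ℝ := fun y => -(1/(2*c)) * (Real.cosh y * P y - Real.sinh y * Q y) with hw
  set w1 : ℝ → ℝ := fun y => -(1/(2*c)) * (Real.sinh y * P y - Real.cosh y * Q y) with hw1
  -- v = w on Ioo 0 L
  have hvw : Set.EqOn v w (Set.Ioo 0 L) := by
    intro x hx
    obtain ⟨hx0, hxL⟩ := hx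
    set e₁ : ℝ → ℝ := fun t => -Real.cosh (x - t - L/2) / (2*c) * f t with he₁
    set e₂ : ℝ → ℝ := fun t => -Real.cosh (x - t + L/2) / (2*c) * f t with he₂
    have hconte₁ : Continuous e₁ := by fun_prop
    have hconte₂ : Continuous e₂ := by fun_prop
    have hse1 : Set.EqOn (fun t => G (x - t) * f t) e₁ (Set.uIcc 0 x) := by
      intro t ht
      rw [Set.uIcc_of_le (le_of_lt hx0)] at ht
      obtain ⟨ht0, htx⟩ := ht
      have hmem : x - t ∈ Set.Icc (0:ℝ) L := ⟨by linarith, by linarith⟩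
      simp only [he₁]
      rw [G_eval _ hmem]
    have hse2 : Set.EqOn (fun t => G (x - t) * f t) e₂ (Set.uIcc x L) := by
      intro t ht
      rw [Set.uIcc_of_le (le_of_lt hxL)] at ht
      obtain ⟨htx, htL⟩ := ht
      have hmem : (x - t) + L ∈ Set.Icc (0:ℝ) L := ⟨by linarith, by linarith⟩
      simp only [he₂]
      rw [← G_per (x - t), G_eval _ hmem, show x - t + L - L/2 = x - t + L/2 by ring]
    have hint1 : IntervalIntegrable (fun t => G (x - t) * f t) MeasureTheory.volume 0 x :=
      (hconte₁.intervalIntegrable _ _).congr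
        (fun t ht => (hse1 (Set.uIoc_subset_uIcc ht)).symm)
    have hint2 : IntervalIntegrable (fun t => G (x - t) * f t) MeasureTheory.volume x L :=
      (hconte₂.intervalIntegrable _ _).congr
        (fun t ht => (hse2 (Set.uIoc_subset_uIcc ht)).symm)
    rw [hv x, ← integral_add_adjacent_intervals hint1 hint2]
    rw [integral_congr hse1, integral_congr hse2]
    -- rewrite e₁, e₂ into separated form
    have hre1 : ∀ t : ℝ, e₁ t = -(1/(2*c)) * (Real.cosh x * (Real.cosh (t + L/2) * f t)
        - Real.sinh x * (Real.sinh (t + L/2) * f t)) := by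
      intro t
      simp only [he₁]
      rw [show x - t - L/2 = x - (t + L/2) by ring, Real.cosh_sub]
      ring
    have hre2 : ∀ t : ℝ, e₂ t = -(1/(2*c)) * (Real.cosh x * (Real.cosh (t - L/2) * f t)
        - Real.sinh x * (Real.sinh (t - L/2) * f t)) := by
      intro t
      simp only [he₂]
      rw [show x - t + L/2 = x - (t - L/2) by ring, Real.cosh_sub]
      ring
    have hI1 : (∫ t in (0:ℝ)..x, e₁ t) = -(1/(2*c)) * (Real.cosh x * A x - Real.sinh x * B x) := by
      rw [integral_congr (g := fun t => -(1/(2*c)) * (Real.cosh x * (Real.cosh (t + L/2) * f t)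
        - Real.sinh x * (Real.sinh (t + L/2) * f t))) (fun t _ => hre1 t)]
      rw [integral_const_mul, integral_sub
        ((hcontA.intervalIntegrable _ _).const_mul _) ((hcontB.intervalIntegrable _ _).const_mul _),
        integral_const_mul, integral_const_mul]
    have hI2 : (∫ t in x..L, e₂ t)
        = -(1/(2*c)) * (Real.cosh x * (C L - C x) - Real.sinh x * (S L - S x)) := by
      rw [integral_congr (g := fun t => -(1/(2*c)) * (Real.cosh x * (Real.cosh (t - L/2) * f t)
        - Real.sinh x * (Real.sinh (t - L/2) * f t))) (fun t _ => hre2 t)]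
      rw [integral_const_mul, integral_sub
        ((hcontC.intervalIntegrable _ _).const_mul _) ((hcontS.intervalIntegrable _ _).const_mul _),
        integral_const_mul, integral_const_mul]
      have hCx : C L - C x = ∫ t in x..L, Real.cosh (t - L/2) * f t := by
        simp only [hC]
        rw [integral_interval_sub_left (hcontC.intervalIntegrable _ _)
          (hcontC.intervalIntegrable _ _)]
      have hSx : S L - S x = ∫ t in x..L, Real.sinh (t - L/2) * f t := by
        simp only [hS]
        rw [integral_interval_sub_left (hcontS.intervalIntegrable _ _)
          (hcontS.intervalIntegrable _ _)]
      rw [hCx, hSx]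
    rw [hI1, hI2]
    simp only [hw, hP, hQ]
    ring
  -- derivative of w
  have hderw : ∀ y : ℝ, HasDerivAt w (w1 y) y := by
    intro y
    have h0 : HasDerivAt w (-(1/(2*c)) * ((Real.sinh y * P y
        + Real.cosh y * (Real.cosh (y + L/2) * f y - Real.cosh (y - L/2) * f y))
        - (Real.cosh y * Q y
        + Real.sinh y * (Real.sinh (y + L/2) * f y - Real.sinh (y - L/2) * f y)))) y :=
      (((Real.hasDerivAt_cosh y).mul (hderP y)).sub
        ((Real.hasDerivAt_sinh y).mul (hderQ y))).const_mul _
    convert h0 using 1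
    simp only [hw1]
    rw [Real.cosh_add, Real.cosh_sub, Real.sinh_add, Real.sinh_sub]
    ring
  -- derivative of w1
  have hderw1 : ∀ y : ℝ, HasDerivAt w1 (w y + f y) y := by
    intro y
    have h0 : HasDerivAt w1 (-(1/(2*c)) * ((Real.cosh y * P y
        + Real.sinh y * (Real.cosh (y + L/2) * f y - Real.cosh (y - L/2) * f y))
        - (Real.sinh y * Q y
        + Real.cosh y * (Real.sinh (y + L/2) * f y - Real.sinh (y - L/2) * f y)))) y :=
      (((Real.hasDerivAt_sinh y).mul (hderP y)).sub
        ((Real.hasDerivAt_cosh y).mul (hderQ y))).const_mul _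
    convert h0 using 1
    have key : Real.cosh y ^ 2 - Real.sinh y ^ 2 = 1 := Real.cosh_sq_sub_sinh_sq y
    have hc' : c ≠ 0 := ne_of_gt hc
    simp only [hw]
    rw [Real.cosh_add, Real.cosh_sub, Real.sinh_add, Real.sinh_sub]
    field_simp
    first
    | linear_combination (2 * c * f y) * key
    | linear_combination (-(2 * c * f y)) * key
    | linear_combination (4 * c * f y) * key
    | linear_combination (-(4 * c * f y)) * key
  -- conclusion
  intro x hx
  have hvx : v x = w x := hvw hx
  have hderivv : Set.EqOn (deriv v) w1 (Set.Ioo 0 L) := by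
    intro y hy
    have hev : v =ᶠ[nhds y] w :=
      Filter.eventuallyEq_of_mem (isOpen_Ioo.mem_nhds hy) hvw
    rw [hev.deriv_eq, (hderw y).deriv]
  have hev2 : deriv v =ᶠ[nhds x] w1 :=
    Filter.eventuallyEq_of_mem (isOpen_Ioo.mem_nhds hx) hderivv
  rw [hev2.deriv_eq, (hderw1 x).deriv, hvx]
  ring
end
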